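/- Let Γ_m ⊆ Γ_1 be subgroups of SL₂ defined by congruence conditions modulo Np^m and Np respectively (upper-left and lower-right entries ≡ 1, lower-left entry ≡ 0 modulo Np^m, resp. Np). Suppose Q = c x² - 2a x y - b y² and Q' = c' x² - 2a' x y - b' y² are binary quadratic forms with integer coefficients satisfying Np^m | c, Np^m | 2a, b ≡ b' ≡ t (mod Np^m) for some fixed unit t, and Q' = Q|g for some g = [[α,β],[γ,δ]] ∈ Γ_1. Then γ ≡ 0 (mod Np^m) and δ ≡ 1 (mod Np^m); in particular g ∈ Γ_m. -/

import Mathlib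

/-!
Reducing `Q' = Q|g` modulo `Np^m`, where `c` and `2a` vanish and `b ≡ b' ≡ t` is a unit, the
`y²`-coefficient gives `t δ² ≡ t`, so `δ² ≡ 1`, and the `xy`-coefficient gives `2 t γ δ ≡ 0`.
Since `δ ≡ 1 (mod Np)` and `Np` is odd, `δ + 1 ≡ 2` is prime to `Np`, hence to `Np^m`; so
`δ² ≡ 1` forces `δ ≡ 1 (mod Np^m)`, and then `γ ≡ 0` because `2`, `t` and `δ` are units.
-/

theorem IsCoprime.of_dvd_sub {R : Type*} [CommRing R] {n x y : R} (hy : IsCoprime y n)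
    (h : n ∣ x - y) : IsCoprime x n := by
  obtain ⟨k, hk⟩ := h
  rw [show x = y + n * k by rw [← hk]; ring]
  exact hy.add_mul_left_left k

theorem Int.dvd_sub_one_of_dvd_sq_sub_one {N p x : ℤ} (m : ℕ) (hN : Odd N) (hp : Odd p)
    (h1 : N * p ∣ x - 1) (h2 : N * p ^ m ∣ x ^ 2 - 1) : N * p ^ m ∣ x - 1 := by
  have hNp : IsCoprime (x + 1) (N * p) :=
    (isCoprime_two_left.mpr (hN.mul hp)).of_dvd_sub (by rwa [show x + 1 - 2 = x - 1 by ring])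
  have hNpm : IsCoprime (x + 1) (N * p ^ m) :=
    hNp.of_mul_right_left.mul_right hNp.of_mul_right_right.pow_right
  exact hNpm.symm.dvd_of_dvd_mul_right (by rwa [mul_comm (x - 1), ← sq_sub_sq, one_pow])

theorem gamma_m_injectivity_general (N p m : ℕ) (hp : p.Prime) (hp2 : p ≠ 2)
    (hN : Odd N)
    (t a b c a' b' α β γ δ : ℤ)
    -- `g ∈ Γ₁`
    (hδ1 : δ ≡ 1 [ZMOD (N * p)])
    -- coefficient conditions on `Q` and `Q'`
    (hc : (↑(N * p ^ m) : ℤ) ∣ c) (ha : (↑(N * p ^ m) : ℤ) ∣ 2 * a)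
    (ha' : (↑(N * p ^ m) : ℤ) ∣ 2 * a')
    (hb : b ≡ t [ZMOD (N * p ^ m)]) (hb' : b' ≡ t [ZMOD (N * p ^ m)])
    (ht : IsUnit (t : ZMod (N * p ^ m)))
    -- `Q' = Q|g`
    (e2 : a' = -(c * α * β) + a * β * γ + a * α * δ + b * γ * δ)
    (e3 : b' = -(c * β ^ 2) + 2 * a * β * δ + b * δ ^ 2) :
    (↑(N * p ^ m) : ℤ) ∣ γ ∧ δ ≡ 1 [ZMOD (N * p ^ m)] := by
  have hN' : Odd (N : ℤ) := by exact_mod_cast hN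
  have hp' : Odd (p : ℤ) := by exact_mod_cast hp.odd_of_ne_two hp2
  have htn : IsCoprime t (N * p ^ m) := by
    have := (ZMod.coe_int_isUnit_iff_isCoprime t _).mp ht
    push_cast at this
    exact this.symm
  push_cast at hc ha ha' ⊢
  have hbn : IsCoprime b (N * p ^ m) := htn.of_dvd_sub hb.symm.dvd
  have hδsq : (N * p ^ m : ℤ) ∣ b * (δ ^ 2 - 1) := by
    have : b * (δ ^ 2 - 1) = (b' - t) - (b - t) + c * β ^ 2 - 2 * a * (β * δ) := by
      rw [e3]; ring
    rw [this]
    exact ((hb'.symm.dvd.sub hb.symm.dvd).add (hc.mul_right _)).sub (ha.mul_right _)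
  have hδ : (N * p ^ m : ℤ) ∣ δ - 1 :=
    Int.dvd_sub_one_of_dvd_sq_sub_one m hN' hp' hδ1.symm.dvd
      (hbn.symm.dvd_of_dvd_mul_left hδsq)
  have hγ : (N * p ^ m : ℤ) ∣ (2 * b * δ) * γ := by
    have : 2 * b * δ * γ = 2 * a' + c * (2 * α * β) - 2 * a * (β * γ) - 2 * a * (α * δ) := by
      rw [e2]; ring
    rw [this]
    exact ((ha'.add (hc.mul_right _)).sub (ha.mul_right _)).sub (ha.mul_right _)
  have h2bδ : IsCoprime (2 * b * δ) (N * p ^ m) :=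
    ((Int.isCoprime_two_left.mpr (hN'.mul hp'.pow)).mul_left hbn).mul_left
      (isCoprime_one_left.of_dvd_sub hδ)
  exact ⟨h2bδ.symm.dvd_of_dvd_mul_left hγ, (Int.modEq_of_dvd hδ).symm⟩

/-- injectivity step of Lemma 3.6: if `Q, Q'` are binary
quadratic forms `c x² - 2a xy - b y²`, `c' x² - 2a' xy - b' y²` with
`Np^m ∣ c, 2a, c', 2a'`, `b ≡ b' ≡ t (mod Np^m)` for a unit `t`, and
`Q' = Q|g` for `g = [[α,β],[γ,δ]] ∈ Γ₁` (congruence conditions mod `Np`),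
then `γ ≡ 0` and `δ ≡ 1 (mod Np^m)`, i.e. `g ∈ Γ_m`. -/
theorem gamma_m_injectivity (N p m : ℕ) (hp : p.Prime) (hp2 : p ≠ 2)
    (hN : Odd N) (hNp : Nat.Coprime N p) (hm : 1 ≤ m) (h3 : 3 ≤ N * p)
    (t a b c a' b' c' α β γ δ : ℤ)
    (hdet : α * δ - β * γ = 1)
    -- `g ∈ Γ₁`
    (hγ1 : (↑(N * p) : ℤ) ∣ γ)
    (hα1 : α ≡ 1 [ZMOD (N * p)]) (hδ1 : δ ≡ 1 [ZMOD (N * p)])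
    -- coefficient conditions on `Q` and `Q'`
    (hc : (↑(N * p ^ m) : ℤ) ∣ c) (ha : (↑(N * p ^ m) : ℤ) ∣ 2 * a)
    (hc' : (↑(N * p ^ m) : ℤ) ∣ c') (ha' : (↑(N * p ^ m) : ℤ) ∣ 2 * a')
    (hb : b ≡ t [ZMOD (N * p ^ m)]) (hb' : b' ≡ t [ZMOD (N * p ^ m)])
    (ht : IsUnit (t : ZMod (N * p ^ m)))
    -- `Q' = Q|g`
    (e1 : c' = c * α ^ 2 - 2 * a * α * γ - b * γ ^ 2)
    (e2 : a' = -(c * α * β) + a * β * γ + a * α * δ + b * γ * δ)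
    (e3 : b' = -(c * β ^ 2) + 2 * a * β * δ + b * δ ^ 2) :
    (↑(N * p ^ m) : ℤ) ∣ γ ∧ δ ≡ 1 [ZMOD (N * p ^ m)] :=
  gamma_m_injectivity_general N p m hp hp2 hN t a b c a' b' α β γ δ hδ1 hc ha ha' hb hb' ht e2 e3
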